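/- Let d ≥ 1 and let σ be a minimal permutation with d descents of size 2d. Then σ alternates isolated descents and isolated ascents, starting and ending with a descent: σ has a descent at position i if and only if i is odd (1 ≤ i ≤ 2d−1), and an ascent at position i if and only if i is even (2 ≤ i ≤ 2d−2). -/

import Mathlib

/-- `σ` has a descent at (0-based) position `i`, i.e. `σ i > σ (i+1)`. -/
def IsDescentAt {n : ℕ} (σ : Equiv.Perm (Fin n)) (i : ℕ) : Prop :=
  ∃ h : i + 1 < n, σ ⟨i + 1, h⟩ < σ ⟨i, Nat.lt_of_succ_lt h⟩

/-- The number of descents of `σ`. -/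
noncomputable def descNum {n : ℕ} (σ : Equiv.Perm (Fin n)) : ℕ :=
  {i : ℕ | IsDescentAt σ i}.ncard

/-- `π` is a pattern of `σ` (written `π ≺ σ`). -/
def IsPattern {k n : ℕ} (π : Equiv.Perm (Fin k)) (σ : Equiv.Perm (Fin n)) : Prop :=
  ∃ f : Fin k ↪o Fin n, ∀ ℓ m : Fin k, π ℓ < π m → σ (f ℓ) < σ (f m)

/-- `σ` is a minimal permutation with `d` descents: it has `d` descents and every
pattern `π ≺ σ` with `π ≠ σ` (equivalently, of strictly smaller size) has fewer
than `d` descents. -/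
def MinimalWithDescents (d : ℕ) {n : ℕ} (σ : Equiv.Perm (Fin n)) : Prop :=
  descNum σ = d ∧
    ∀ (k : ℕ) (π : Equiv.Perm (Fin k)), k < n → IsPattern π σ → descNum π < d

/-!
Deleting the entry at position `j` of `σ` gives a smaller pattern, and if neither of the two
adjacent pairs `(j - 1, j)`, `(j, j + 1)` is a descent, every descent of `σ` survives the
deletion. Hence in a minimal permutation every position `j` lies in the pair `(k, k + 1)` of some
descent `k`. For size `2d` the `d` descents thus give `d` dominoes `{k, k + 1}` covering the `2d`
positions, so they tile them; and the only domino tiling of `{0, …, 2d - 1}` uses the dominoes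
starting at the even positions.
-/

open Equiv Set

theorem mem_iff_even_of_domino_cover {S : Set ℕ} {n : ℕ} (hS : ∀ k ∈ S, k + 1 < n)
    (hcover : Iio n ⊆ S ∪ (· + 1) '' S) (hcard : 2 * S.ncard ≤ n) :
    ∀ i, i + 1 < n → (i ∈ S ↔ Even i) := by
  have hfin : S.Finite := (finite_Iio n).subset fun k hk => by simpa using (hS k hk).le
  have hunion : S ∪ (· + 1) '' S = Iio n := by
    refine (union_subset (fun k hk => ?_) ?_).antisymm hcover
    · simpa using (hS k hk).le
    · rintro _ ⟨k, hk, rfl⟩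
      exact hS k hk
  -- `n ≤ |S ∪ (S + 1)| ≤ 2 |S| ≤ n`, so the union is disjoint
  have hdisj : S ∩ (· + 1) '' S = ∅ := by
    have := ncard_union_add_ncard_inter S ((· + 1) '' S) hfin (hfin.image _)
    rw [hunion, ncard_Iio_nat, ncard_image_of_injective _ (add_left_injective 1)] at this
    exact (ncard_eq_zero (hfin.inter_of_left _)).mp (by omega)
  have hsucc_mem : ∀ k, k + 1 < n → (k + 1 ∈ S ↔ k ∉ S) := by
    intro k hk
    constructor
    · intro hk1 hk0
      exact (eq_empty_iff_forall_notMem.mp hdisj) (k + 1) ⟨hk1, k, hk0, rfl⟩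
    · intro hk0
      have : k + 1 ∈ S ∪ (· + 1) '' S := hunion ▸ (show k + 1 < n from hk)
      rcases this with h | ⟨m, hm, hmk⟩
      · exact h
      · exact absurd (add_right_cancel hmk ▸ hm) hk0
  intro i hi
  induction i with
  | zero =>
    have : 0 ∈ S ∪ (· + 1) '' S := hunion ▸ (show 0 < n by omega)
    simpa using this
  | succ i ih =>
    rw [hsucc_mem i (by omega), ih (by omega), Nat.even_add_one]

theorem isDescentAt_iff {n : ℕ} (σ : Perm (Fin n)) {i : ℕ} (hi : i + 1 < n) :
    IsDescentAt σ i ↔ σ ⟨i + 1, hi⟩ < σ ⟨i, Nat.lt_of_succ_lt hi⟩ :=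
  exists_prop_of_true hi

theorem lt_succ_iff_not_isDescentAt {n : ℕ} (σ : Perm (Fin n)) {i : ℕ} (hi : i + 1 < n) :
    σ ⟨i, Nat.lt_of_succ_lt hi⟩ < σ ⟨i + 1, hi⟩ ↔ ¬ IsDescentAt σ i := by
  have hne : σ ⟨i, Nat.lt_of_succ_lt hi⟩ ≠ σ ⟨i + 1, hi⟩ := σ.injective.ne (by simp)
  rw [isDescentAt_iff σ hi, not_lt, hne.le_iff_lt]

theorem finite_setOf_isDescentAt {n : ℕ} (σ : Perm (Fin n)) : {i | IsDescentAt σ i}.Finite :=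
  (finite_Iio n).subset fun _ ⟨hi, _⟩ => Nat.lt_of_succ_lt hi

theorem val_succAbove {n : ℕ} (p : Fin (n + 1)) (i : Fin n) :
    (p.succAbove i : ℕ) = if (i : ℕ) < p then (i : ℕ) else (i : ℕ) + 1 := by
  unfold Fin.succAbove
  split_ifs <;> simp_all [Fin.lt_def]

section Deletion

variable {N : ℕ} (σ : Perm (Fin (N + 1))) (j : Fin (N + 1))

/-- The entries off position `j` are standardized by pulling them back along `(σ j).succAbove`. -/
def deleteAt : Perm (Fin N) :=
  (finSuccAboveEquiv j).trans <|
    (σ.subtypeEquiv (p := (· ≠ j)) (q := (· ≠ σ j)) fun _ => σ.injective.ne_iff.symm).trans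
      (finSuccAboveEquiv (σ j)).symm

theorem succAbove_deleteAt (ℓ : Fin N) : (σ j).succAbove (deleteAt σ j ℓ) = σ (j.succAbove ℓ) :=
  congrArg Subtype.val ((finSuccAboveEquiv (σ j)).apply_symm_apply _)

theorem deleteAt_lt_deleteAt_iff {a b : Fin N} :
    deleteAt σ j a < deleteAt σ j b ↔ σ (j.succAbove a) < σ (j.succAbove b) := by
  rw [← succAbove_deleteAt, ← succAbove_deleteAt, Fin.succAbove_lt_succAbove_iff]

theorem isPattern_deleteAt : IsPattern (deleteAt σ j) σ :=
  ⟨Fin.succAboveOrderEmb j, fun _ _ => (deleteAt_lt_deleteAt_iff σ j).mp⟩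

theorem descNum_le_descNum_deleteAt (hj : ∀ k, IsDescentAt σ k → k ≠ j ∧ k + 1 ≠ j) :
    descNum σ ≤ descNum (deleteAt σ j) := by
  -- a descent `k` of `σ` is not adjacent to `j`, so it reappears at `k` or `k - 1`
  refine ncard_le_ncard_of_injOn (fun k => if k < j then k else k - 1) ?_ ?_
    (finite_setOf_isDescentAt _)
  · rintro k ⟨hk, hlt⟩
    obtain ⟨hkj, hkj'⟩ := hj k ⟨hk, hlt⟩
    refine ⟨by split_ifs <;> omega, ?_⟩
    rw [deleteAt_lt_deleteAt_iff]
    convert hlt using 2 <;> ext <;> simp only [val_succAbove] <;> split_ifs <;> omega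
  · intro a ha b hb hab
    have ha_ne := hj a ha
    have hb_ne := hj b hb
    simp only at hab
    split_ifs at hab <;> omega

end Deletion

theorem MinimalWithDescents.Iio_subset_union_image_succ {d n : ℕ} {σ : Perm (Fin n)}
    (h : MinimalWithDescents d σ) :
    Iio n ⊆ {k | IsDescentAt σ k} ∪ (· + 1) '' {k | IsDescentAt σ k} := by
  intro j hj
  by_contra hnot
  obtain ⟨N, rfl⟩ : ∃ N, n = N + 1 := ⟨n - 1, by simp at hj; omega⟩
  have hle := descNum_le_descNum_deleteAt σ ⟨j, hj⟩ fun k hk =>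
    ⟨fun hkj => hnot (Or.inl (by subst hkj; exact hk)), fun hkj => hnot (Or.inr ⟨k, hk, hkj⟩)⟩
  have hlt := h.2 N _ N.lt_succ_self (isPattern_deleteAt σ ⟨j, hj⟩)
  rw [h.1] at hle
  omega

/-- In 0-based indexing the even positions are the paper's odd positions `1, 3, …, 2d - 1`. -/
theorem minimal_of_size_two_mul_alternates_general (d : ℕ)
    (σ : Equiv.Perm (Fin (2 * d))) (h : MinimalWithDescents d σ) :
    ∀ (i : ℕ) (hi : i + 1 < 2 * d),
      (σ ⟨i + 1, hi⟩ < σ ⟨i, Nat.lt_of_succ_lt hi⟩ ↔ Even i) ∧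
      (σ ⟨i, Nat.lt_of_succ_lt hi⟩ < σ ⟨i + 1, hi⟩ ↔ Odd i) := by
  have hdesc := mem_iff_even_of_domino_cover (fun _ hk => hk.1) h.Iio_subset_union_image_succ
    (by rw [← descNum, h.1])
  intro i hi
  have hdesc_i : IsDescentAt σ i ↔ Even i := hdesc i hi
  exact ⟨(isDescentAt_iff σ hi).symm.trans hdesc_i,
    (lt_succ_iff_not_isDescentAt σ hi).trans (hdesc_i.not.trans Nat.not_even_iff_odd)⟩

/-- A minimal permutation with `d` descents of (maximal) size `2d` alternates isolated
descents and isolated ascents, starting and ending with a descent: in 0-based indexing,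
there is a descent at position `i` iff `i` is even, and an ascent at position `i` iff
`i` is odd (positions `i` with `i + 1 < 2d`; 0-based even positions are the paper's odd
1-based positions `1, 3, …, 2d - 1`). -/
theorem minimal_of_size_two_mul_alternates (d : ℕ) (hd : 1 ≤ d)
    (σ : Equiv.Perm (Fin (2 * d))) (h : MinimalWithDescents d σ) :
    ∀ (i : ℕ) (hi : i + 1 < 2 * d),
      (σ ⟨i + 1, hi⟩ < σ ⟨i, Nat.lt_of_succ_lt hi⟩ ↔ Even i) ∧
      (σ ⟨i, Nat.lt_of_succ_lt hi⟩ < σ ⟨i + 1, hi⟩ ↔ Odd i) :=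
  minimal_of_size_two_mul_alternates_general d σ h
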